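/- arXiv:2405.07048 — 3 statements merged into one kernel-verified Lean document; each statement's English description precedes it below -/
import Mathlib

section
/- Mean Value Theorem for Dini derivatives: let f : ℝ → ℝ be continuous and a < b, and set γ := (f(b) − f(a))/(b − a). Then there exist c₁, c₂, c₃, c₄ ∈ (a, b) such that D⁺f(c₁) ≤ γ, D⁻f(c₂) ≤ γ, γ ≤ D₊f(c₃), and γ ≤ D₋f(c₄). -/
open Filter

/-- Upper right Dini derivative: `D⁺f(t) = limsup_{h→0⁺} (f(t+h) − f(t))/h`. -/
noncomputable def diniUpperRight (f : ℝ → ℝ) (t : ℝ) : EReal :=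
  limsup (fun h : ℝ => (((f (t + h) - f t) / h : ℝ) : EReal)) (nhdsWithin 0 (Set.Ioi 0))

/-- Lower right Dini derivative: `D₊f(t) = liminf_{h→0⁺} (f(t+h) − f(t))/h`. -/
noncomputable def diniLowerRight (f : ℝ → ℝ) (t : ℝ) : EReal :=
  liminf (fun h : ℝ => (((f (t + h) - f t) / h : ℝ) : EReal)) (nhdsWithin 0 (Set.Ioi 0))

/-- Upper left Dini derivative: `D⁻f(t) = limsup_{h→0⁻} (f(t+h) − f(t))/h`. -/
noncomputable def diniUpperLeft (f : ℝ → ℝ) (t : ℝ) : EReal :=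
  limsup (fun h : ℝ => (((f (t + h) - f t) / h : ℝ) : EReal)) (nhdsWithin 0 (Set.Iio 0))

/-- Lower left Dini derivative: `D₋f(t) = liminf_{h→0⁻} (f(t+h) − f(t))/h`. -/
noncomputable def diniLowerLeft (f : ℝ → ℝ) (t : ℝ) : EReal :=
  liminf (fun h : ℝ => (((f (t + h) - f t) / h : ℝ) : EReal)) (nhdsWithin 0 (Set.Iio 0))

/-- Key lemma: if `g` is continuous and `g a = g b` with `a < b`, there is an interior point
`c` such that eventually to the right `g (c + h) ≤ g c`. -/
lemma dini_key_lemma (g : ℝ → ℝ) (hg : Continuous g) (a b : ℝ) (hab : a < b)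
    (hgab : g a = g b) :
    ∃ c ∈ Set.Ioo a b, ∀ᶠ h in nhdsWithin 0 (Set.Ioi 0), g (c + h) ≤ g c := by
  by_cases H1 : ∃ x ∈ Set.Icc a b, g a < g x
  · -- the max of g on [a,b] is interior
    obtain ⟨m, hm, hmax⟩ := isCompact_Icc.exists_isMaxOn (Set.nonempty_Icc.2 hab.le)
      hg.continuousOn
    obtain ⟨x, hx, hgx⟩ := H1
    have hxm : g x ≤ g m := hmax hx
    have hma : a < m := by
      rcases hm.1.lt_or_eq with h | h
      · exact h
      · exfalso; rw [← h] at hxm; linarith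
    have hmb : m < b := by
      rcases hm.2.lt_or_eq with h | h
      · exact h
      · exfalso; rw [h] at hxm; linarith
    refine ⟨m, ⟨hma, hmb⟩, ?_⟩
    have hsmall : ∀ᶠ h in nhdsWithin (0:ℝ) (Set.Ioi 0), h < b - m :=
      (eventually_lt_nhds (by linarith : (0:ℝ) < b - m)).filter_mono nhdsWithin_le_nhds
    filter_upwards [hsmall, self_mem_nhdsWithin] with h hh h0
    have h0' : (0:ℝ) < h := h0
    exact hmax ⟨by linarith, by linarith⟩
  push_neg at H1
  by_cases H2 : ∃ x ∈ Set.Icc a b, g x < g a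
  · -- crossing argument
    obtain ⟨d, hd, hgd⟩ := H2
    have hda : a < d := hd.1.lt_of_ne (by rintro rfl; exact absurd hgd (lt_irrefl _))
    have hdb : d < b := hd.2.lt_of_ne (by rintro rfl; rw [hgab] at hgd; exact absurd hgd (lt_irrefl _))
    set v : ℝ := (g d + g a) / 2 with hv
    have hv1 : g d < v := by simp only [hv]; linarith
    have hv2 : v < g a := by simp only [hv]; linarith
    set S : Set ℝ := Set.Icc a d ∩ g ⁻¹' {v} with hS
    have hSne : S.Nonempty := by
      have := intermediate_value_Icc' hda.le (hg.continuousOn (s := Set.Icc a d))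
      obtain ⟨c, hc, hgc⟩ := this ⟨hv1.le, hv2.le⟩
      exact ⟨c, hc, hgc⟩
    have hSclosed : IsClosed S := isClosed_Icc.inter (isClosed_singleton.preimage hg)
    have hSbdd : BddAbove S := ⟨d, fun x hx => hx.1.2⟩
    set c : ℝ := sSup S with hc
    have hcS : c ∈ S := hSclosed.csSup_mem hSne hSbdd
    have hgcv : g c = v := hcS.2
    have hcd : c < d := hcS.1.2.lt_of_ne (by intro h; rw [h] at hgcv; linarith)
    have hca : a < c := hcS.1.1.lt_of_ne (by intro h; rw [← h] at hgcv; linarith)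
    have hclaim : ∀ x, c < x → x ≤ d → g x < v := by
      intro x hcx hxd
      by_contra hge
      push_neg at hge
      have hsub : Set.Icc x d ⊆ Set.Icc a b :=
        Set.Icc_subset_Icc (by linarith) (by linarith)
      obtain ⟨y, hy, hgy⟩ := intermediate_value_Icc' hxd
        (hg.continuousOn (s := Set.Icc x d)) ⟨hv1.le, hge⟩
      have hyS : y ∈ S := ⟨⟨by linarith [hy.1], hy.2⟩, hgy⟩
      have : y ≤ c := le_csSup hSbdd hyS
      linarith [hy.1]
    refine ⟨c, ⟨hca, by linarith⟩, ?_⟩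
    have hsmall : ∀ᶠ h in nhdsWithin (0:ℝ) (Set.Ioi 0), h < d - c :=
      (eventually_lt_nhds (by linarith : (0:ℝ) < d - c)).filter_mono nhdsWithin_le_nhds
    filter_upwards [hsmall, self_mem_nhdsWithin] with h hh h0
    have h0' : (0:ℝ) < h := h0
    have := hclaim (c + h) (by linarith) (by linarith)
    linarith
  · -- g is constant on [a,b]
    push_neg at H2
    refine ⟨(a + b) / 2, ⟨by linarith, by linarith⟩, ?_⟩
    have hconst : ∀ x ∈ Set.Icc a b, g x = g a := fun x hx => le_antisymm (H1 x hx) (H2 x hx)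
    have hsmall : ∀ᶠ h in nhdsWithin (0:ℝ) (Set.Ioi 0), h < (b - a) / 2 :=
      (eventually_lt_nhds (by linarith : (0:ℝ) < (b - a) / 2)).filter_mono nhdsWithin_le_nhds
    filter_upwards [hsmall, self_mem_nhdsWithin] with h hh h0
    have h0' : (0:ℝ) < h := h0
    rw [hconst ((a + b) / 2 + h) ⟨by linarith, by linarith⟩,
      hconst ((a + b) / 2) ⟨by linarith, by linarith⟩]

lemma dini_neg_tendsto :
    Tendsto (fun k : ℝ => -k) (nhdsWithin 0 (Set.Iio 0)) (nhdsWithin 0 (Set.Ioi 0)) := by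
  apply tendsto_nhdsWithin_of_tendsto_nhds_of_eventually_within
  · simpa using (continuous_neg.tendsto (0:ℝ)).mono_left
      (nhdsWithin_le_nhds (s := Set.Iio (0:ℝ)))
  · filter_upwards [self_mem_nhdsWithin] with x hx
    simpa using hx

theorem mean_value_theorem_for_dini_derivatives
    (f : ℝ → ℝ) (hf : Continuous f) (a b : ℝ) (hab : a < b) :
    ∃ c₁ ∈ Set.Ioo a b, ∃ c₂ ∈ Set.Ioo a b, ∃ c₃ ∈ Set.Ioo a b, ∃ c₄ ∈ Set.Ioo a b,
      diniUpperRight f c₁ ≤ (((f b - f a) / (b - a) : ℝ) : EReal) ∧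
      diniUpperLeft f c₂ ≤ (((f b - f a) / (b - a) : ℝ) : EReal) ∧
      (((f b - f a) / (b - a) : ℝ) : EReal) ≤ diniLowerRight f c₃ ∧
      (((f b - f a) / (b - a) : ℝ) : EReal) ≤ diniLowerLeft f c₄ := by
  set γ : ℝ := (f b - f a) / (b - a) with hγ
  have hba : (0:ℝ) < b - a := by linarith
  have hγeq : f b - f a = γ * (b - a) := by
    rw [hγ]; field_simp
  set g : ℝ → ℝ := fun x => f x - γ * x with hg
  have hgc : Continuous g := hf.sub (continuous_const.mul continuous_id)
  have hgab : g a = g b := by simp only [hg]; nlinarith [hγeq]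
  -- c₁ : upper right
  obtain ⟨c₁, hc₁, hev₁⟩ := dini_key_lemma g hgc a b hab hgab
  have h1 : diniUpperRight f c₁ ≤ (γ : EReal) := by
    apply limsup_le_of_le (by isBoundedDefault)
    filter_upwards [hev₁, self_mem_nhdsWithin] with h hh h0
    have h0' : (0:ℝ) < h := h0
    have : f (c₁ + h) - f c₁ ≤ γ * h := by simp only [hg] at hh; nlinarith
    exact EReal.coe_le_coe_iff.2 ((div_le_iff₀ h0').2 (by linarith))
  -- c₃ : lower right, via -g
  obtain ⟨c₃, hc₃, hev₃⟩ := dini_key_lemma (fun x => -g x) (hgc.neg) a b hab (by simp [hgab])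
  have h3 : (γ : EReal) ≤ diniLowerRight f c₃ := by
    apply le_liminf_of_le (by isBoundedDefault)
    filter_upwards [hev₃, self_mem_nhdsWithin] with h hh h0
    have h0' : (0:ℝ) < h := h0
    have : γ * h ≤ f (c₃ + h) - f c₃ := by simp only [hg] at hh; nlinarith
    exact EReal.coe_le_coe_iff.2 ((le_div_iff₀ h0').2 (by linarith))
  -- reflection G x = g (a + b - x)
  have hGc : Continuous (fun x => g (a + b - x)) := hgc.comp (continuous_const.sub continuous_id)
  have hGab : g (a + b - a) = g (a + b - b) := by
    have : a + b - a = b := by ring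
    have h2 : a + b - b = a := by ring
    rw [this, h2, hgab]
  -- c₄ : lower left, via reflection
  obtain ⟨c', hc', hev'⟩ := dini_key_lemma (fun x => g (a + b - x)) hGc a b hab hGab
  have h4 : (γ : EReal) ≤ diniLowerLeft f (a + b - c') := by
    apply le_liminf_of_le (by isBoundedDefault)
    have hev4 : ∀ᶠ k in nhdsWithin (0:ℝ) (Set.Iio 0),
        g (a + b - (c' + -k)) ≤ g (a + b - c') := dini_neg_tendsto.eventually hev'
    filter_upwards [hev4, self_mem_nhdsWithin] with k hk k0
    have k0' : k < (0:ℝ) := k0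
    have heq : a + b - (c' + -k) = (a + b - c') + k := by ring
    rw [heq] at hk
    have : f ((a + b - c') + k) - f (a + b - c') ≤ γ * k := by simp only [hg] at hk; nlinarith
    refine EReal.coe_le_coe_iff.2 ?_
    rw [le_div_iff_of_neg k0']
    linarith
  -- c₂ : upper left, via negated reflection
  obtain ⟨c'', hc'', hev''⟩ := dini_key_lemma (fun x => -g (a + b - x)) hGc.neg a b hab
    (show -g (a + b - a) = -g (a + b - b) from by rw [hGab])
  have h2 : diniUpperLeft f (a + b - c'') ≤ (γ : EReal) := by
    apply limsup_le_of_le (by isBoundedDefault)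
    have hev2 : ∀ᶠ k in nhdsWithin (0:ℝ) (Set.Iio 0),
        -g (a + b - (c'' + -k)) ≤ -g (a + b - c'') := dini_neg_tendsto.eventually hev''
    filter_upwards [hev2, self_mem_nhdsWithin] with k hk k0
    have k0' : k < (0:ℝ) := k0
    have heq : a + b - (c'' + -k) = (a + b - c'') + k := by ring
    rw [heq] at hk
    have : γ * k ≤ f ((a + b - c'') + k) - f (a + b - c'') := by
      simp only [hg] at hk; nlinarith
    refine EReal.coe_le_coe_iff.2 ?_
    rw [div_le_iff_of_neg k0']
    linarith
  have hmem : ∀ c, c ∈ Set.Ioo a b → a + b - c ∈ Set.Ioo a b := by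
    intro c hc
    exact ⟨by linarith [hc.2], by linarith [hc.1]⟩
  exact ⟨c₁, hc₁, a + b - c'', hmem c'' hc'', c₃, hc₃, a + b - c', hmem c' hc', h1, h2, h3, h4⟩
end

section
/- Gronwall inequality for Dini derivatives: let f, a, g : ℝ → ℝ be continuous functions such that D⁺f(t) ≤ a(t)·f(t) + g(t) for all t. Fix t₀ ∈ ℝ and let A(t) := ∫_{t₀}^{t} a(s) ds. Then for all t ≥ t₀, f(t) ≤ [ f(t₀) + ∫_{t₀}^{t} g(s) e^{−A(s)} ds ] e^{A(t)}. -/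
/-! Compare `f` with the solution `B_ε` of `y' = a y + g + ε`, `y t₀ = f t₀`: at a first touching
point `f = B_ε` we would have `D⁺f ≤ a f + g < B_ε'`, which is impossible, so `f ≤ B_ε`;
then let `ε → 0`. -/

open Filter

open Set Topology Real

theorem eventually_slope_lt_of_diniUpperRight_lt {f : ℝ → ℝ} {x r : ℝ}
    (h : diniUpperRight f x < r) : ∀ᶠ z in 𝓝[>] x, slope f x z < r := by
  have hquot : ∀ᶠ h in 𝓝[>] (0 : ℝ), (((f (x + h) - f x) / h : ℝ) : EReal) < r :=
    eventually_lt_of_limsup_lt h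
  have hshift : Tendsto (fun z => z - x) (𝓝[>] x) (𝓝[>] 0) :=
    tendsto_nhdsWithin_iff.mpr
      ⟨tendsto_nhdsWithin_of_tendsto_nhds (by simpa using (continuous_sub_right x).tendsto x),
        eventually_mem_nhdsWithin.mono fun z hz => mem_Ioi.mpr (sub_pos.mpr hz)⟩
  filter_upwards [hshift.eventually hquot] with z hz
  rw [slope_def_field]
  simpa using (EReal.coe_lt_coe_iff.mp hz)

theorem image_le_of_diniUpperRight_lt_deriv_boundary {f f' B B' : ℝ → ℝ} {a b : ℝ}
    (hf : ContinuousOn f (Icc a b)) (hf' : ∀ x ∈ Ico a b, diniUpperRight f x ≤ f' x)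
    (ha : f a ≤ B a) (hB : ∀ x, HasDerivAt B (B' x) x)
    (bound : ∀ x ∈ Ico a b, f x = B x → f' x < B' x) : ∀ ⦃x⦄, x ∈ Icc a b → f x ≤ B x :=
  image_le_of_liminf_slope_right_lt_deriv_boundary hf
    (fun x hx _ hr => (eventually_slope_lt_of_diniUpperRight_lt
      ((hf' x hx).trans_lt (EReal.coe_lt_coe_iff.mpr hr))).frequently) ha hB bound

noncomputable def linearODESolution (a g : ℝ → ℝ) (t₀ y₀ t : ℝ) : ℝ :=
  (y₀ + ∫ s in t₀..t, g s * exp (-∫ r in t₀..s, a r)) * exp (∫ s in t₀..t, a s)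

section linearODESolution

variable {a g : ℝ → ℝ} {t₀ y₀ : ℝ}

@[simp]
theorem linearODESolution_self : linearODESolution a g t₀ y₀ t₀ = y₀ := by
  simp [linearODESolution]

theorem hasDerivAt_linearODESolution (ha : Continuous a) (hg : Continuous g) (t : ℝ) :
    HasDerivAt (linearODESolution a g t₀ y₀) (a t * linearODESolution a g t₀ y₀ t + g t) t := by
  have hA : ∀ s, HasDerivAt (fun s => ∫ r in t₀..s, a r) (a s) s := fun s =>
    (ha.integral_hasStrictDerivAt t₀ s).hasDerivAt
  have hAcont : Continuous fun s => ∫ r in t₀..s, a r :=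
    intervalIntegral.continuous_primitive (fun _ _ => ha.intervalIntegrable _ _) t₀
  have hI : HasDerivAt (fun t => y₀ + ∫ s in t₀..t, g s * exp (-∫ r in t₀..s, a r))
      (g t * exp (-∫ r in t₀..t, a r)) t :=
    ((hg.mul hAcont.neg.rexp).integral_hasStrictDerivAt t₀ t).hasDerivAt.const_add y₀
  refine (hI.mul (hA t).exp).congr_deriv ?_
  simp only [linearODESolution, exp_neg]
  field_simp
  ring

theorem linearODESolution_add_const (ha : Continuous a) (hg : Continuous g) (ε t : ℝ) :
    linearODESolution a (fun s => g s + ε) t₀ y₀ t =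
      linearODESolution a g t₀ y₀ t + ε * linearODESolution a (fun _ => 1) t₀ 0 t := by
  have hE : Continuous fun s => exp (-∫ r in t₀..s, a r) :=
    (intervalIntegral.continuous_primitive (fun _ _ => ha.intervalIntegrable _ _) t₀).neg.rexp
  simp only [linearODESolution, add_mul, one_mul, zero_add]
  rw [intervalIntegral.integral_add, intervalIntegral.integral_const_mul]
  · ring
  · exact (hg.mul hE).intervalIntegrable _ _
  · exact (continuous_const.mul hE).intervalIntegrable _ _

end linearODESolution

theorem le_linearODESolution_of_diniUpperRight_le {f a g : ℝ → ℝ} {t₀ t y₀ : ℝ}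
    (hf : ContinuousOn f (Icc t₀ t)) (ha : Continuous a) (hg : Continuous g)
    (hD : ∀ x ∈ Ico t₀ t, diniUpperRight f x ≤ ((a x * f x + g x : ℝ) : EReal))
    (h₀ : f t₀ ≤ y₀) (ht : t₀ ≤ t) : f t ≤ linearODESolution a g t₀ y₀ t := by
  have hstrict : ∀ ε > 0, f t ≤ linearODESolution a (fun s => g s + ε) t₀ y₀ t := fun ε hε =>
    image_le_of_diniUpperRight_lt_deriv_boundary hf hD (by simpa using h₀)
      (hasDerivAt_linearODESolution ha (hg.add continuous_const))
      (fun x _ hfx => show a x * f x + g x < a x * _ + (g x + ε) by rw [hfx]; linarith)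
      (right_mem_Icc.mpr ht)
  have hlim : Tendsto (fun ε => linearODESolution a (fun s => g s + ε) t₀ y₀ t) (𝓝[>] 0)
      (𝓝 (linearODESolution a g t₀ y₀ t)) := by
    simp only [linearODESolution_add_const ha hg]
    exact tendsto_nhdsWithin_of_tendsto_nhds (by
      simpa using (by fun_prop : Continuous fun ε : ℝ =>
        linearODESolution a g t₀ y₀ t + ε * linearODESolution a (fun _ => 1) t₀ 0 t).tendsto 0)
  exact ge_of_tendsto hlim (eventually_nhdsWithin_of_forall hstrict)

theorem gronwall_inequality_dini
    (f a g : ℝ → ℝ) (hf : Continuous f) (ha : Continuous a) (hg : Continuous g)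
    (hD : ∀ t : ℝ, diniUpperRight f t ≤ ((a t * f t + g t : ℝ) : EReal))
    (t₀ : ℝ) :
    ∀ t : ℝ, t₀ ≤ t →
      f t ≤ (f t₀ + ∫ s in t₀..t, g s * Real.exp (-(∫ r in t₀..s, a r))) *
              Real.exp (∫ s in t₀..t, a s) := fun _ ht =>
  le_linearODESolution_of_diniUpperRight_le hf.continuousOn ha hg (fun x _ => hD x) le_rfl ht
end

section
/- Let f, g : ℝ → ℝ be continuous and non-negative functions such that for every t with f(t) ≠ 0 one has D⁺f(t) ≤ g(t). Then D⁺f(t) ≤ g(t) holds for every t ∈ ℝ. -/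
open Filter

open Set in
lemma slope_eventually_lt (f : ℝ → ℝ) (x : ℝ) {M r : ℝ}
    (h : diniUpperRight f x ≤ ((M : ℝ) : EReal)) (hr : M < r) :
    ∀ᶠ z in nhdsWithin x (Set.Ioi x), slope f x z < r := by
  have hlt : diniUpperRight f x < ((r : ℝ) : EReal) :=
    lt_of_le_of_lt h (by exact_mod_cast hr)
  have hev : ∀ᶠ h' in nhdsWithin (0:ℝ) (Set.Ioi 0),
      (((f (x + h') - f x) / h' : ℝ) : EReal) < ((r : ℝ) : EReal) :=
    eventually_lt_of_limsup_lt hlt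
  rw [(nhdsGT_basis (0:ℝ)).eventually_iff] at hev
  obtain ⟨c, hc, hcev⟩ := hev
  rw [(nhdsGT_basis x).eventually_iff]
  refine ⟨x + c, by linarith, fun z hz => ?_⟩
  have hz' : z - x ∈ Ioo (0:ℝ) c := ⟨by linarith [hz.1], by linarith [hz.2]⟩
  have := hcev hz'
  rw [show x + (z - x) = z by ring] at this
  have : (f z - f x) / (z - x) < r := by exact_mod_cast this
  rwa [slope_def_field]

open Set in
lemma key_mvt (f : ℝ → ℝ) (hf : Continuous f) {a b M : ℝ} (hab : a ≤ b)
    (hM : ∀ x ∈ Set.Ico a b, diniUpperRight f x ≤ ((M : ℝ) : EReal)) :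
    f b - f a ≤ M * (b - a) := by
  have := image_le_of_liminf_slope_right_le_deriv_boundary (f := f) (a := a) (b := b)
    (B := fun x => f a + M * (x - a)) (B' := fun _ => M)
    hf.continuousOn (by simp) (by fun_prop)
    (fun x _ => (((hasDerivWithinAt_id x (Ici x)).sub_const a).const_mul M).const_add (f a)
      |>.congr_deriv (by ring))
    (fun x hx r hr => ((slope_eventually_lt f x (hM x hx) hr).frequently))
  have hb := this (right_mem_Icc.2 hab)
  linarith

theorem dini_bound_extends_to_zeros
    (f g : ℝ → ℝ) (hf : Continuous f) (hg : Continuous g)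
    (hf0 : ∀ t : ℝ, 0 ≤ f t) (hg0 : ∀ t : ℝ, 0 ≤ g t)
    (h : ∀ t : ℝ, f t ≠ 0 → diniUpperRight f t ≤ ((g t : ℝ) : EReal)) :
    ∀ t : ℝ, diniUpperRight f t ≤ ((g t : ℝ) : EReal) := by
  intro t
  by_cases ht : f t = 0
  swap
  · exact h t ht
  -- f t = 0 case
  by_contra hcon
  push_neg at hcon
  obtain ⟨x, hx1, hx2⟩ := EReal.lt_iff_exists_real_btwn.1 hcon
  have hgx : g t < x := by exact_mod_cast hx1
  set ε := x - g t with hε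
  have hεpos : 0 < ε := by simp [hε]; linarith
  -- continuity of g at t: find δ with g u ≤ x on [t, t+δ]
  obtain ⟨δ, hδpos, hδ⟩ := Metric.continuousAt_iff.1 hg.continuousAt ε hεpos
  have hbound : ∀ u : ℝ, t ≤ u → u < t + δ → g u ≤ x := by
    intro u hu1 hu2
    have : |g u - g t| < ε := by
      have := hδ (show dist u t < δ by rw [Real.dist_eq, abs_of_nonneg (by linarith)]; linarith)
      rwa [Real.dist_eq] at this
    have := abs_lt.1 this
    linarith [this.1, this.2]
  -- claim: for h ∈ (0, δ), (f (t+h) - f t)/h ≤ x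
  have hquot : ∀ h' : ℝ, 0 < h' → h' < δ → (f (t + h') - f t) / h' ≤ x := by
    intro h' hpos hlt
    rw [ht, sub_zero]
    rw [div_le_iff₀ hpos]
    have hxpos : 0 ≤ x := le_trans (hg0 t) (le_of_lt hgx)
    by_cases hfz : f (t + h') = 0
    · rw [hfz]; positivity
    -- sup of zero set
    set Z := {u : ℝ | u ∈ Set.Icc t (t + h') ∧ f u = 0} with hZ
    have hZne : t ∈ Z := ⟨⟨le_refl t, by linarith⟩, ht⟩
    have hZbdd : BddAbove Z := ⟨t + h', fun u hu => hu.1.2⟩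
    set s := sSup Z with hs
    have hsmem : s ∈ Z := by
      have hcl : IsClosed Z := by
        have : Z = Set.Icc t (t + h') ∩ f ⁻¹' {0} := rfl
        rw [this]
        exact isClosed_Icc.inter (isClosed_singleton.preimage hf)
      exact hcl.csSup_mem ⟨t, hZne⟩ hZbdd
    have hst : t ≤ s := le_csSup hZbdd hZne
    have hsb : s ≤ t + h' := hsmem.1.2
    have hfs : f s = 0 := hsmem.2
    have hslt : s < t + h' := lt_of_le_of_ne hsb (fun he => hfz (he ▸ hfs))
    -- f (t+h') ≤ x * (t + h' - s) + η for all η > 0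
    have hkey : ∀ η : ℝ, 0 < η → f (t + h') ≤ x * (t + h' - s) + η := by
      intro η hη
      obtain ⟨δ₂, hδ₂pos, hδ₂⟩ := Metric.continuousAt_iff.1 (hf.continuousAt (x := s)) η hη
      set s' := min (s + δ₂ / 2) ((s + (t + h')) / 2) with hs'
      have hs'gt : s < s' := by
        apply lt_min <;> [linarith; linarith]
      have hs'lt : s' < t + h' := by
        apply lt_of_le_of_lt (min_le_right _ _); linarith
      have hfs' : f s' < η := by
        have : dist s' s < δ₂ := by
          rw [Real.dist_eq, abs_of_nonneg (by linarith)]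
          have : s' ≤ s + δ₂ / 2 := min_le_left _ _
          linarith
        have := hδ₂ this
        rw [Real.dist_eq, hfs, sub_zero, abs_of_nonneg (hf0 s')] at this
        exact this
      have hne : ∀ u ∈ Set.Ico s' (t + h'), f u ≠ 0 := by
        intro u hu hu0
        have : u ∈ Z := ⟨⟨by linarith [hu.1, hst, hs'gt], le_of_lt hu.2⟩, hu0⟩
        have : u ≤ s := le_csSup hZbdd this
        linarith [hu.1, hs'gt]
      have hmvt := key_mvt f hf (le_of_lt hs'lt) (M := x) (fun u hu => by
        refine le_trans (h u (hne u hu)) ?_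
        have : g u ≤ x := hbound u (by linarith [hu.1, hst, hs'gt]) (by linarith [hu.2])
        exact_mod_cast this)
      have hfac : x * (t + h' - s') ≤ x * (t + h' - s) := by
        apply mul_le_mul_of_nonneg_left _ hxpos
        linarith
      linarith
    have : f (t + h') ≤ x * (t + h' - s) := by
      by_contra hc
      push_neg at hc
      have := hkey ((f (t + h') - x * (t + h' - s)) / 2) (by linarith)
      linarith
    calc f (t + h') ≤ x * (t + h' - s) := this
      _ ≤ x * h' := by apply mul_le_mul_of_nonneg_left _ hxpos; linarith
  -- conclude limsup ≤ x, contradiction with x < diniUpperRight f t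
  have hev : ∀ᶠ h' in nhdsWithin (0:ℝ) (Set.Ioi 0),
      (((f (t + h') - f t) / h' : ℝ) : EReal) ≤ ((x : ℝ) : EReal) := by
    rw [(nhdsGT_basis (0:ℝ)).eventually_iff]
    exact ⟨δ, hδpos, fun h' hh' => by exact_mod_cast hquot h' hh'.1 hh'.2⟩
  have : diniUpperRight f t ≤ ((x : ℝ) : EReal) := limsup_le_of_le (by isBoundedDefault) hev
  exact absurd hx2 (not_lt.2 this)
end
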